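/- arXiv:2010.14179 — 2 statements merged into one kernel-verified Lean document; each statement's English description precedes it below -/
import Mathlib

section
/- Let M ≥ 1 be an integer, let Ω₁, …, Ω_{M+1} be real numbers with Ω_{M+1} ≠ 0. Then for all t ≥ 0, G_{M+1}(t) = (e^{iΩ_{M+1}t}/(iΩ_{M+1})) · G_M(t) − ∫₀ᵗ (e^{i(Ω_{M+1}+Ω_M)τ}/(iΩ_{M+1})) · G_{M−1}(τ) dτ, where G_{M−1}, G_M, G_{M+1} are formed from the frequency lists (Ω₁,…,Ω_{M−1}), (Ω₁,…,Ω_M), (Ω₁,…,Ω_{M+1}) respectively. -/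
/-!
Peeling off the last variable `t_{M+1}` of the simplex (Fubini) gives the recursion
`G_{M+1}(t) = ∫₀ᵗ e^{iΩ_{M+1}x} G_M(x) dx`, so `G_M` is an iterated primitive with
`G_M' = e^{iΩ_M t} G_{M-1}` and `G_M(0) = 0` for `M ≥ 1`. Integrating `e^{iΩ_{M+1}x} G_M(x)`
by parts against the primitive `e^{iΩ_{M+1}x} / (iΩ_{M+1})` gives the formula.
-/

open MeasureTheory

/-- `G M Ω t = ∫_{0 ≤ t₁ ≤ ⋯ ≤ t_M ≤ t} ∏_{j=1}^M e^{i Ω_j t_j} dt₁⋯dt_M`,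
with the convention `G 0 Ω t = 1`. -/
noncomputable def G (M : ℕ) (Ω : ℕ → ℝ) (t : ℝ) : ℂ :=
  ∫ s in {s : Fin M → ℝ | (∀ j, s j ∈ Set.Icc 0 t) ∧ ∀ i j : Fin M, i ≤ j → s i ≤ s j},
    ∏ j : Fin M, Complex.exp (Complex.I * (Ω (j.val + 1)) * (s j))

open Set Complex

def orderedSimplex (k : ℕ) (t : ℝ) : Set (Fin k → ℝ) :=
  {s | (∀ j, s j ∈ Icc 0 t) ∧ Monotone s}

noncomputable def expPhase (Ω : ℕ → ℝ) (k : ℕ) (s : Fin k → ℝ) : ℂ :=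
  ∏ j : Fin k, cexp (I * Ω (j.val + 1) * s j)

lemma G_eq_setIntegral (M : ℕ) (Ω : ℕ → ℝ) (t : ℝ) :
    G M Ω t = ∫ s in orderedSimplex M t, expPhase Ω M s :=
  rfl

lemma isCompact_orderedSimplex (k : ℕ) (t : ℝ) : IsCompact (orderedSimplex k t) := by
  have : orderedSimplex k t = univ.pi (fun _ => Icc 0 t) ∩ {s | Monotone s} := by
    ext s; simp [orderedSimplex, Pi.le_def, forall_and]
  rw [this]
  exact (isCompact_univ_pi fun _ => isCompact_Icc).inter_right isClosed_monotone

lemma measurableSet_orderedSimplex (k : ℕ) (t : ℝ) : MeasurableSet (orderedSimplex k t) :=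
  (isCompact_orderedSimplex k t).isClosed.measurableSet

lemma snoc_mem_orderedSimplex_iff {k : ℕ} {t x : ℝ} {y : Fin k → ℝ} :
    Fin.snoc y x ∈ orderedSimplex (k + 1) t ↔ x ∈ Icc 0 t ∧ y ∈ orderedSimplex k x := by
  simp only [orderedSimplex, Monotone, mem_ofPred_eq, Fin.forall_fin_succ', Fin.snoc_castSucc,
    Fin.snoc_last, Fin.castSucc_le_castSucc_iff, Fin.le_last, (Fin.castSucc_lt_last _).not_ge,
    le_refl, false_imp_iff, forall_const, implies_true, and_true]
  constructor
  · rintro ⟨⟨hy, hx⟩, hmono⟩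
    exact ⟨hx, fun j => ⟨(hy j).1, (hmono j).2⟩, fun i j hij => (hmono i).1 j hij⟩
  · rintro ⟨hx, hy, hmono⟩
    exact ⟨⟨fun j => ⟨(hy j).1, (hy j).2.trans hx.2⟩, hx⟩,
      fun i => ⟨fun j hij => hmono hij, (hy i).2⟩⟩

lemma continuous_expPhase (Ω : ℕ → ℝ) (k : ℕ) : Continuous (expPhase Ω k) := by
  unfold expPhase; fun_prop

lemma expPhase_snoc (Ω : ℕ → ℝ) (k : ℕ) (y : Fin k → ℝ) (x : ℝ) :
    expPhase Ω (k + 1) (Fin.snoc y x) = cexp (I * Ω (k + 1) * x) * expPhase Ω k y := by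
  simp [expPhase, Fin.prod_univ_castSucc, mul_comm]

lemma G_zero (Ω : ℕ → ℝ) (t : ℝ) : G 0 Ω t = 1 := by
  have : orderedSimplex 0 t = univ := by ext s; simp [orderedSimplex, Monotone]
  simp [G_eq_setIntegral, expPhase, this, measureReal_def, volume_pi]

lemma integral_eq_integral_integral_snoc {E : Type*} [NormedAddCommGroup E] [NormedSpace ℝ E]
    {α : Type*} [MeasureSpace α] [SigmaFinite (volume : Measure α)] {k : ℕ}
    {f : (Fin (k + 1) → α) → E} (hf : Integrable f) :
    ∫ s, f s = ∫ x, ∫ y, f (Fin.snoc y x) := by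
  have he := (volume_preserving_piFinSuccAbove (fun _ : Fin (k + 1) => α) (Fin.last k)).symm
  have hsymm : ∀ x y, (MeasurableEquiv.piFinSuccAbove (fun _ => α) (Fin.last k)).symm (x, y)
      = Fin.snoc y x := by
    simp [MeasurableEquiv.piFinSuccAbove_symm_apply, Fin.insertNthEquiv, Fin.insertNth_last']
  rw [← he.integral_comp (MeasurableEquiv.measurableEmbedding _), Measure.volume_eq_prod,
    integral_prod]
  · simp only [hsymm]
  · exact (he.integrable_comp_emb (MeasurableEquiv.measurableEmbedding _)).2 hf

lemma indicator_orderedSimplex_snoc (Ω : ℕ → ℝ) (k : ℕ) (t x : ℝ) (y : Fin k → ℝ) :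
    (orderedSimplex (k + 1) t).indicator (expPhase Ω (k + 1)) (Fin.snoc y x) =
      (Icc 0 t).indicator
        (fun x => cexp (I * Ω (k + 1) * x) * (orderedSimplex k x).indicator (expPhase Ω k) y)
        x := by
  by_cases hx : x ∈ Icc 0 t <;> by_cases hy : y ∈ orderedSimplex k x <;>
    simp [snoc_mem_orderedSimplex_iff, expPhase_snoc, hx, hy]

lemma G_succ (k : ℕ) (Ω : ℕ → ℝ) (t : ℝ) :
    G (k + 1) Ω t = ∫ x in Icc 0 t, cexp (I * Ω (k + 1) * x) * G k Ω x := by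
  have hint : Integrable ((orderedSimplex (k + 1) t).indicator (expPhase Ω (k + 1))) :=
    ((continuous_expPhase Ω _).continuousOn.integrableOn_compact
      (isCompact_orderedSimplex _ t)).integrable_indicator (measurableSet_orderedSimplex _ t)
  have hslice (x : ℝ) :
      ∫ y, (orderedSimplex (k + 1) t).indicator (expPhase Ω (k + 1)) (Fin.snoc y x) =
        (Icc 0 t).indicator (fun x => cexp (I * Ω (k + 1) * x) * G k Ω x) x := by
    simp_rw [indicator_orderedSimplex_snoc]
    by_cases hx : x ∈ Icc 0 t
    · simp only [indicator_of_mem hx]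
      rw [integral_const_mul, integral_indicator (measurableSet_orderedSimplex _ _),
        G_eq_setIntegral]
    · simp [indicator_of_notMem hx]
  rw [G_eq_setIntegral, ← integral_indicator (measurableSet_orderedSimplex _ _),
    integral_eq_integral_integral_snoc hint, ← integral_indicator measurableSet_Icc]
  simp only [hslice]

/-- Agrees with `G` for `t ≥ 0`, but, unlike the simplex integral, is continuous and
differentiable by construction. -/
noncomputable def iteratedPrimitive (Ω : ℕ → ℝ) : ℕ → ℝ → ℂ
  | 0 => fun _ => 1
  | k + 1 => fun t => ∫ τ in 0..t, cexp (I * Ω (k + 1) * τ) * iteratedPrimitive Ω k τ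

lemma iteratedPrimitive_succ (Ω : ℕ → ℝ) (k : ℕ) (t : ℝ) :
    iteratedPrimitive Ω (k + 1) t =
      ∫ τ in 0..t, cexp (I * Ω (k + 1) * τ) * iteratedPrimitive Ω k τ :=
  rfl

lemma continuous_iteratedPrimitive (Ω : ℕ → ℝ) (k : ℕ) :
    Continuous (iteratedPrimitive Ω k) := by
  induction k with
  | zero => exact continuous_const
  | succ k ih =>
    have hcont : Continuous fun τ : ℝ =>
        cexp (I * Ω (k + 1) * τ) * iteratedPrimitive Ω k τ := by
      fun_prop
    exact intervalIntegral.continuous_primitive (fun a b => hcont.intervalIntegrable a b) 0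

lemma continuous_cexp_mul_iteratedPrimitive (Ω : ℕ → ℝ) (k : ℕ) :
    Continuous fun τ : ℝ => cexp (I * Ω (k + 1) * τ) * iteratedPrimitive Ω k τ := by
  have := continuous_iteratedPrimitive Ω k
  fun_prop

lemma hasDerivAt_iteratedPrimitive_succ (Ω : ℕ → ℝ) (k : ℕ) (τ : ℝ) :
    HasDerivAt (iteratedPrimitive Ω (k + 1))
      (cexp (I * Ω (k + 1) * τ) * iteratedPrimitive Ω k τ) τ := by
  have hcont := continuous_cexp_mul_iteratedPrimitive Ω k
  exact intervalIntegral.integral_hasDerivAt_right (hcont.intervalIntegrable _ _)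
    (hcont.stronglyMeasurableAtFilter _ _) hcont.continuousAt

lemma G_eq_iteratedPrimitive (Ω : ℕ → ℝ) (k : ℕ) {t : ℝ} (ht : 0 ≤ t) :
    G k Ω t = iteratedPrimitive Ω k t := by
  induction k generalizing t with
  | zero => exact G_zero Ω t
  | succ k ih =>
    rw [G_succ, iteratedPrimitive_succ, intervalIntegral.integral_of_le ht,
      ← integral_Icc_eq_integral_Ioc]
    exact setIntegral_congr_fun measurableSet_Icc fun τ hτ => by rw [ih hτ.1]

theorem intervalIntegral.integral_cexp_mul_eq {c : ℂ} (hc : c ≠ 0) {u u' : ℝ → ℂ}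
    {a b : ℝ}
    (hu : ∀ x ∈ uIcc a b, HasDerivAt u (u' x) x) (hu' : IntervalIntegrable u' volume a b) :
    ∫ x in a..b, cexp (c * x) * u x =
      cexp (c * b) / c * u b - cexp (c * a) / c * u a -
        ∫ x in a..b, cexp (c * x) / c * u' x := by
  have hv (x : ℝ) : HasDerivAt (fun x : ℝ => cexp (c * x) / c) (cexp (c * x)) x := by
    have := (((hasDerivAt_id (x : ℂ)).const_mul c).cexp.div_const c).comp_ofReal
    simpa [mul_div_cancel_right₀ _ hc] using this
  have hcont : Continuous fun x : ℝ => cexp (c * x) := by fun_prop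
  simp_rw [mul_comm (cexp _) (u _), mul_comm (cexp _ / c) (u' _)]
  rw [intervalIntegral.integral_mul_deriv_eq_deriv_mul hu (fun x _ => hv x) hu'
    (hcont.intervalIntegrable a b)]
  ring

theorem stmt_1 (M : ℕ) (hM : 1 ≤ M) (Ω : ℕ → ℝ) (hΩ : Ω (M + 1) ≠ 0)
    (t : ℝ) (ht : 0 ≤ t) :
    G (M + 1) Ω t =
      Complex.exp (Complex.I * Ω (M + 1) * t) / (Complex.I * Ω (M + 1)) * G M Ω t -
        ∫ τ in (0:ℝ)..t,
          Complex.exp (Complex.I * (Ω (M + 1) + Ω M) * τ) / (Complex.I * Ω (M + 1)) *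
            G (M - 1) Ω τ := by
  obtain ⟨m, rfl⟩ := Nat.exists_eq_add_of_le' hM
  have hc : I * (Ω (m + 1 + 1) : ℂ) ≠ 0 := mul_ne_zero I_ne_zero (ofReal_ne_zero.2 hΩ)
  have hcont := continuous_cexp_mul_iteratedPrimitive Ω m
  rw [G_eq_iteratedPrimitive Ω _ ht, G_eq_iteratedPrimitive Ω _ ht, iteratedPrimitive_succ,
    intervalIntegral.integral_cexp_mul_eq hc
      (fun τ _ => hasDerivAt_iteratedPrimitive_succ Ω m τ) (hcont.intervalIntegrable _ _),
    iteratedPrimitive_succ Ω m 0, intervalIntegral.integral_same, mul_zero, sub_zero,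
    Nat.add_sub_cancel]
  congr 1
  refine intervalIntegral.integral_congr fun τ hτ => ?_
  rw [uIcc_of_le ht] at hτ
  simp only [G_eq_iteratedPrimitive Ω m hτ.1, mul_add, add_mul, exp_add]
  ring
end

section
/- Let E be a normed ring (so ‖xy‖ ≤ ‖x‖·‖y‖), let q : ℤ → (0,∞), and let l ≥ l₁ be real numbers such that S := ∑_{α ∈ A} q^{−(l−l₁)α} < ∞. Let φ, ψ : A → E satisfy ‖φ‖_{−1,−l₁} < ∞ and ‖ψ‖_{−1,−l} < ∞. Then the Wick product φ ⋄ ψ satisfies ‖φ ⋄ ψ‖²_{−1,−l} ≤ S · ‖φ‖²_{−1,−l₁} · ‖ψ‖²_{−1,−l}. -/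
open scoped BigOperators ENNReal

/-- `α! = ∏_k α(k)!` as a real number. -/
noncomputable def factA (α : ℤ →₀ ℕ) : ℝ :=
  ∏ k ∈ α.support, (Nat.factorial (α k) : ℝ)

/-- `q^{rα} = ∏_k q(k)^{r·α(k)}`. -/
noncomputable def qpow (q : ℤ → ℝ) (r : ℝ) (α : ℤ →₀ ℕ) : ℝ :=
  ∏ k ∈ α.support, q k ^ (r * (α k : ℝ))

/-- The Wick product `(φ ⋄ ψ)_α = ∑_{α₁+α₂=α} √(α!/(α₁!·α₂!)) φ_{α₁} ψ_{α₂}`. -/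
noncomputable def wick {E : Type*} [NormedRing E] [NormedSpace ℝ E]
    (φ ψ : (ℤ →₀ ℕ) → E) (α : ℤ →₀ ℕ) : E :=
  ∑ p ∈ Finset.HasAntidiagonal.antidiagonal α,
    Real.sqrt (factA α / (factA p.1 * factA p.2)) • (φ p.1 * ψ p.2)

/-- `‖φ‖²_{-1,-l} = ∑_α (q^{-lα}/α!) ‖φ_α‖²`, valued in `ℝ≥0∞`. -/
noncomputable def Knorm {E : Type*} [NormedRing E] (q : ℤ → ℝ) (l : ℝ)
    (φ : (ℤ →₀ ℕ) → E) : ℝ≥0∞ :=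
  ∑' α : ℤ →₀ ℕ, ENNReal.ofReal (qpow q (-l) α / factA α * ‖φ α‖ ^ 2)

/-!
For `β + γ = α` the weights factor as
`q^{-lα}/α! · α!/(β!γ!) = q^{-(l-l₁)β} · (q^{-l₁β}/β!) · (q^{-lγ}/γ!)`,
so Cauchy–Schwarz over the antidiagonal of `α` bounds the `α`-th term of `‖φ ⋄ ψ‖²_{-1,-l}` by
`(∑_{β+γ=α} q^{-(l-l₁)β}) · ∑_{β+γ=α} (q^{-l₁β}/β!)‖φ_β‖² · (q^{-lγ}/γ!)‖ψ_γ‖²`.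
The first factor is at most `S`, and summing the second one over `α` is a Cauchy product.
-/

open Finset Finset.HasAntidiagonal

namespace ENNReal

variable {A : Type*}

theorem sum_antidiagonal_fst_le_tsum [AddMonoid A] [IsLeftCancelAdd A] [HasAntidiagonal A]
    (f : A → ℝ≥0∞) (n : A) : ∑ p ∈ antidiagonal n, f p.1 ≤ ∑' a, f a := by
  classical
  have hfst : Set.InjOn Prod.fst (antidiagonal n : Set (A × A)) := fun p hp p' hp' h =>
    Prod.ext h <| add_left_cancel <| by
      rw [mem_antidiagonal.1 (mem_coe.1 hp), h, mem_antidiagonal.1 (mem_coe.1 hp')]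
  rw [← sum_image hfst]
  exact ENNReal.sum_le_tsum _

theorem tsum_mul_tsum_eq_tsum_sum_antidiagonal [AddMonoid A] [HasAntidiagonal A]
    (f g : A → ℝ≥0∞) :
    (∑' a, f a) * ∑' a, g a = ∑' n, ∑ p ∈ antidiagonal n, f p.1 * g p.2 := by
  rw [← ENNReal.tsum_mul_right]
  simp_rw [← ENNReal.tsum_mul_left]
  rw [← ENNReal.tsum_prod,
    ← sigmaAntidiagonalEquivProd.tsum_eq (fun p : A × A => f p.1 * g p.2), ENNReal.tsum_sigma']
  exact tsum_congr fun n => tsum_subtype (antidiagonal n) fun p => f p.1 * g p.2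

end ENNReal

lemma factA_pos (α : ℤ →₀ ℕ) : 0 < factA α :=
  prod_pos fun k _ => by exact_mod_cast (α k).factorial_pos

noncomputable def KnormTerm {E : Type*} [NormedRing E] (q : ℤ → ℝ) (l : ℝ)
    (φ : (ℤ →₀ ℕ) → E) (α : ℤ →₀ ℕ) : ℝ :=
  qpow q (-l) α / factA α * ‖φ α‖ ^ 2

lemma Knorm_eq_tsum_ofReal_KnormTerm {E : Type*} [NormedRing E] (q : ℤ → ℝ) (l : ℝ)
    (φ : (ℤ →₀ ℕ) → E) : Knorm q l φ = ∑' α, ENNReal.ofReal (KnormTerm q l φ α) :=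
  rfl

lemma norm_wick_le {E : Type*} [NormedRing E] [NormedSpace ℝ E] (φ ψ : (ℤ →₀ ℕ) → E)
    (α : ℤ →₀ ℕ) :
    ‖wick φ ψ α‖ ≤
      ∑ p ∈ antidiagonal α, √(factA α / (factA p.1 * factA p.2)) * (‖φ p.1‖ * ‖ψ p.2‖) := by
  refine (norm_sum_le _ _).trans (sum_le_sum fun p _ => ?_)
  rw [norm_smul, Real.norm_of_nonneg (Real.sqrt_nonneg _)]
  gcongr
  exact norm_mul_le _ _

section PositiveWeights

variable {q : ℤ → ℝ} (hq : ∀ k, 0 < q k)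
include hq

lemma qpow_pos (r : ℝ) (α : ℤ →₀ ℕ) : 0 < qpow q r α :=
  prod_pos fun k _ => Real.rpow_pos_of_pos (hq k) _

lemma qpow_add (r s : ℝ) (α : ℤ →₀ ℕ) :
    qpow q (r + s) α = qpow q r α * qpow q s α := by
  rw [qpow, qpow, qpow, ← prod_mul_distrib]
  exact prod_congr rfl fun k _ => by rw [add_mul, Real.rpow_add (hq k)]

lemma qpow_add_index (r : ℝ) (α β : ℤ →₀ ℕ) :
    qpow q r (α + β) = qpow q r α * qpow q r β :=
  Finsupp.prod_add_index' (h := fun k (n : ℕ) => q k ^ (r * (n : ℝ))) (by simp) fun k m n => by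
    simp only [Nat.cast_add, mul_add, Real.rpow_add (hq k)]

lemma KnormTerm_nonneg {E : Type*} [NormedRing E] (l : ℝ) (φ : (ℤ →₀ ℕ) → E)
    (α : ℤ →₀ ℕ) : 0 ≤ KnormTerm q l φ α :=
  mul_nonneg (div_pos (qpow_pos hq _ α) (factA_pos α)).le (sq_nonneg _)

lemma qpow_div_factA_add_mul_div_factA_mul (l l₁ : ℝ) (β γ : ℤ →₀ ℕ) :
    qpow q (-l) (β + γ) / factA (β + γ) * (factA (β + γ) / (factA β * factA γ)) =
      qpow q (-(l - l₁)) β * (qpow q (-l₁) β / factA β) * (qpow q (-l) γ / factA γ) := by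
  have := (factA_pos (β + γ)).ne'
  have := (factA_pos β).ne'
  have := (factA_pos γ).ne'
  rw [qpow_add_index hq, show -l = -(l - l₁) + -l₁ by ring, qpow_add hq]
  field_simp

lemma sqrt_qpow_div_factA_mul_wick_summand_eq {E : Type*} [NormedRing E] (l l₁ : ℝ)
    (φ ψ : (ℤ →₀ ℕ) → E) (β γ : ℤ →₀ ℕ) :
    √(qpow q (-l) (β + γ) / factA (β + γ)) *
        (√(factA (β + γ) / (factA β * factA γ)) * (‖φ β‖ * ‖ψ γ‖)) =
      √(qpow q (-(l - l₁)) β) * √(KnormTerm q l₁ φ β * KnormTerm q l ψ γ) := by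
  have hw := (div_pos (qpow_pos hq (-l) (β + γ)) (factA_pos (β + γ))).le
  rw [← Real.sqrt_sq (by positivity : 0 ≤ ‖φ β‖ * ‖ψ γ‖), ← Real.sqrt_mul' _ (sq_nonneg _),
    ← Real.sqrt_mul hw, ← Real.sqrt_mul (qpow_pos hq _ β).le, ← mul_assoc,
    qpow_div_factA_add_mul_div_factA_mul hq l l₁, KnormTerm, KnormTerm]
  congr 1
  ring

lemma KnormTerm_wick_le {E : Type*} [NormedRing E] [NormedSpace ℝ E] (l l₁ : ℝ)
    (φ ψ : (ℤ →₀ ℕ) → E) (α : ℤ →₀ ℕ) :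
    KnormTerm q l (wick φ ψ) α ≤
      (∑ p ∈ antidiagonal α, qpow q (-(l - l₁)) p.1) *
        ∑ p ∈ antidiagonal α, KnormTerm q l₁ φ p.1 * KnormTerm q l ψ p.2 := by
  set w := qpow q (-l) α / factA α
  have hw : 0 ≤ w := (div_pos (qpow_pos hq _ α) (factA_pos α)).le
  have hc : ∀ p : (ℤ →₀ ℕ) × (ℤ →₀ ℕ), 0 ≤ qpow q (-(l - l₁)) p.1 :=
    fun p => (qpow_pos hq _ p.1).le
  have hK : ∀ p : (ℤ →₀ ℕ) × (ℤ →₀ ℕ), 0 ≤ KnormTerm q l₁ φ p.1 * KnormTerm q l ψ p.2 :=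
    fun p => mul_nonneg (KnormTerm_nonneg hq _ _ _) (KnormTerm_nonneg hq _ _ _)
  have hCS : √w * ‖wick φ ψ α‖ ≤
      √(∑ p ∈ antidiagonal α, qpow q (-(l - l₁)) p.1) *
        √(∑ p ∈ antidiagonal α, KnormTerm q l₁ φ p.1 * KnormTerm q l ψ p.2) :=
    calc √w * ‖wick φ ψ α‖
        ≤ √w * ∑ p ∈ antidiagonal α,
            √(factA α / (factA p.1 * factA p.2)) * (‖φ p.1‖ * ‖ψ p.2‖) := by
          gcongr; exact norm_wick_le φ ψ α
      _ = ∑ p ∈ antidiagonal α,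
            √(qpow q (-(l - l₁)) p.1) * √(KnormTerm q l₁ φ p.1 * KnormTerm q l ψ p.2) := by
          rw [mul_sum]
          refine sum_congr rfl fun ⟨β, γ⟩ hp => ?_
          obtain rfl : β + γ = α := mem_antidiagonal.1 hp
          exact sqrt_qpow_div_factA_mul_wick_summand_eq hq l l₁ φ ψ β γ
      _ ≤ _ := Real.sum_sqrt_mul_sqrt_le _ hc hK
  calc KnormTerm q l (wick φ ψ) α = (√w * ‖wick φ ψ α‖) ^ 2 := by
        rw [mul_pow, Real.sq_sqrt hw]; rfl
    _ ≤ _ := pow_le_pow_left₀ (by positivity) hCS 2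
    _ = _ := by
        rw [mul_pow, Real.sq_sqrt (sum_nonneg fun p _ => hc p),
          Real.sq_sqrt (sum_nonneg fun p _ => hK p)]

lemma ofReal_KnormTerm_wick_le {E : Type*} [NormedRing E] [NormedSpace ℝ E] (l l₁ : ℝ)
    (φ ψ : (ℤ →₀ ℕ) → E) (α : ℤ →₀ ℕ) :
    ENNReal.ofReal (KnormTerm q l (wick φ ψ) α) ≤
      (∑' β, ENNReal.ofReal (qpow q (-(l - l₁)) β)) *
        ∑ p ∈ antidiagonal α,
          ENNReal.ofReal (KnormTerm q l₁ φ p.1) * ENNReal.ofReal (KnormTerm q l ψ p.2) :=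
  calc ENNReal.ofReal (KnormTerm q l (wick φ ψ) α)
      ≤ ENNReal.ofReal ((∑ p ∈ antidiagonal α, qpow q (-(l - l₁)) p.1) *
          ∑ p ∈ antidiagonal α, KnormTerm q l₁ φ p.1 * KnormTerm q l ψ p.2) :=
        ENNReal.ofReal_le_ofReal (KnormTerm_wick_le hq l l₁ φ ψ α)
    _ = (∑ p ∈ antidiagonal α, ENNReal.ofReal (qpow q (-(l - l₁)) p.1)) *
          ∑ p ∈ antidiagonal α,
            ENNReal.ofReal (KnormTerm q l₁ φ p.1) * ENNReal.ofReal (KnormTerm q l ψ p.2) := by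
        rw [ENNReal.ofReal_mul (sum_nonneg fun p _ => (qpow_pos hq _ p.1).le),
          ENNReal.ofReal_sum_of_nonneg fun p _ => (qpow_pos hq _ p.1).le,
          ENNReal.ofReal_sum_of_nonneg fun p _ =>
            mul_nonneg (KnormTerm_nonneg hq _ _ _) (KnormTerm_nonneg hq _ _ _)]
        simp_rw [ENNReal.ofReal_mul (KnormTerm_nonneg hq _ _ _)]
    _ ≤ _ := by
        gcongr
        exact ENNReal.sum_antidiagonal_fst_le_tsum _ α

end PositiveWeights

theorem stmt_14_general {E : Type*} [NormedRing E] [NormedSpace ℝ E]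
    (q : ℤ → ℝ) (hq : ∀ k, 0 < q k) (l l₁ : ℝ)
    (φ ψ : (ℤ →₀ ℕ) → E) :
    Knorm q l (wick φ ψ) ≤
      (∑' α : ℤ →₀ ℕ, ENNReal.ofReal (qpow q (-(l - l₁)) α)) *
        Knorm q l₁ φ * Knorm q l ψ :=
  calc Knorm q l (wick φ ψ)
      ≤ ∑' α, (∑' β, ENNReal.ofReal (qpow q (-(l - l₁)) β)) *
          ∑ p ∈ antidiagonal α,
            ENNReal.ofReal (KnormTerm q l₁ φ p.1) * ENNReal.ofReal (KnormTerm q l ψ p.2) :=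
        ENNReal.tsum_le_tsum fun α => ofReal_KnormTerm_wick_le hq l l₁ φ ψ α
    _ = _ := by
        rw [ENNReal.tsum_mul_left, Knorm_eq_tsum_ofReal_KnormTerm, Knorm_eq_tsum_ofReal_KnormTerm,
          mul_assoc, ENNReal.tsum_mul_tsum_eq_tsum_sum_antidiagonal
            fun α => ENNReal.ofReal (KnormTerm q l₁ φ α)]

theorem stmt_14 {E : Type*} [NormedRing E] [NormedSpace ℝ E]
    (q : ℤ → ℝ) (hq : ∀ k, 0 < q k) (l l₁ : ℝ) (hl : l₁ ≤ l)
    (hS : (∑' α : ℤ →₀ ℕ, ENNReal.ofReal (qpow q (-(l - l₁)) α)) < ⊤)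
    (φ ψ : (ℤ →₀ ℕ) → E)
    (hφ : Knorm q l₁ φ < ⊤) (hψ : Knorm q l ψ < ⊤) :
    Knorm q l (wick φ ψ) ≤
      (∑' α : ℤ →₀ ℕ, ENNReal.ofReal (qpow q (-(l - l₁)) α)) *
        Knorm q l₁ φ * Knorm q l ψ :=
  stmt_14_general q hq l l₁ φ ψ
end
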